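/- Let K be a field of characteristic zero, n ≥ 4, and let D be a derivation of T(n). For 1 ≤ i < k ≤ n denote by A_{ik,ik} the (i,k) entry of the matrix D(N_{ik}). Then for every pair i < k with k − i ≥ 2, A_{ik,ik} = Σ_{p=i}^{k−1} A_{p(p+1),p(p+1)}; that is, the diagonal coefficient of D on N_{ik} is the sum of the diagonal coefficients of D on the adjacent basis elements N_{p(p+1)}, i ≤ p ≤ k−1. -/

import Mathlib

open Matrix

attribute [local instance 100] LieRing.ofAssociativeRing

/-- The Lie algebra `T(n)` of strictly upper triangular `n × n` matrices over `K`. -/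
def strictUpper (n : ℕ) (K : Type*) [Field K] :
    LieSubalgebra K (Matrix (Fin n) (Fin n) K) where
  carrier := {M | ∀ i j : Fin n, j ≤ i → M i j = 0}
  add_mem' := by
    intro a b ha hb i j hij
    simp [Matrix.add_apply, ha i j hij, hb i j hij]
  zero_mem' := by intro i j hij; simp
  smul_mem' := by
    intro c a ha i j hij
    simp [Matrix.smul_apply, ha i j hij]
  lie_mem' := by
    intro a b ha hb i j hij
    have hmul : ∀ x y : Matrix (Fin n) (Fin n) K,
        (∀ i j : Fin n, j ≤ i → x i j = 0) → (∀ i j : Fin n, j ≤ i → y i j = 0) →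
        (x * y) i j = 0 := by
      intro x y hx hy
      rw [Matrix.mul_apply]
      apply Finset.sum_eq_zero
      intro s _
      rcases le_or_gt s i with h | h
      · rw [hx i s h, zero_mul]
      · rw [hy s j (hij.trans h.le), mul_zero]
    rw [Ring.lie_def, Matrix.sub_apply, hmul a b ha hb, hmul b a hb ha, sub_zero]

/-- The standard basis element `N_{ik}` (with `i < k`) of `T(n)`. -/
def stdN {n : ℕ} {K : Type*} [Field K] {i k : Fin n} (h : i < k) :
    strictUpper n K :=
  ⟨Matrix.single i k 1, by
    intro a b hba
    simp only [Matrix.single, Matrix.of_apply, ite_eq_right_iff, one_ne_zero]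
    rintro ⟨rfl, rfl⟩
    exact absurd h (not_lt.mpr hba)⟩

/-- The basis element `N_{ik}` of `T(n)`, indexed by natural numbers (`0`-based). -/
def natN (n : ℕ) (K : Type*) [Field K] (i k : ℕ) (h1 : i < k) (h2 : k < n) :
    strictUpper n K :=
  stdN (i := ⟨i, h1.trans h2⟩) (k := ⟨k, h2⟩) (Fin.mk_lt_mk.mpr h1)

/-!
For `i < j < k` we have `N_{ik} = ⁅N_{ij}, N_{jk}⁆`, so the Leibniz rule gives
`D N_{ik} = ⁅D N_{ij}, N_{jk}⁆ + ⁅N_{ij}, D N_{jk}⁆`. Bracketing a matrix with a matrix unit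
moves one of its entries into position `(i, k)`: the `(i, k)` entry of the first summand is
`(D N_{ij})_{ij}` and that of the second is `(D N_{jk})_{jk}`. Hence `A_{ik} = A_{ij} + A_{jk}`,
and the formula follows by telescoping.
-/

theorem eq_sum_Ico_of_add_succ {M : Type*} [AddCommMonoid M] (f : ℕ → ℕ → M) {i k : ℕ}
    (hik : i < k) (hf : ∀ j, i < j → j < k → f i (j + 1) = f i j + f j (j + 1)) :
    f i k = ∑ p ∈ Finset.Ico i k, f p (p + 1) := by
  induction k, hik using Nat.le_induction with
  | base => simp
  | succ k hik ih =>
    rw [hf k hik (Nat.lt_succ_self k), ih fun j hij hjk => hf j hij (hjk.trans k.lt_succ_self),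
      Finset.sum_Ico_succ_top (Nat.le_of_lt hik)]

namespace Matrix

variable {ι R : Type*} [Fintype ι] [DecidableEq ι] [Ring R]

theorem lie_single_single_of_ne {i j k : ι} (hki : k ≠ i) (c d : R) :
    ⁅single i j c, single j k d⁆ = single i k (c * d) := by
  rw [Ring.lie_def, single_mul_single_same, single_mul_single_of_ne _ _ _ _ hki, sub_zero]

theorem lie_single_apply_of_ne (X : Matrix ι ι R) {i j k : ι} (hij : i ≠ j) (c : R) :
    ⁅X, single j k c⁆ i k = X i j * c := by
  rw [Ring.lie_def, sub_apply, mul_single_apply_same, single_mul_apply_of_ne _ _ _ _ _ hij,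
    sub_zero]

theorem single_lie_apply_of_ne (Y : Matrix ι ι R) {i j k : ι} (hkj : k ≠ j) (c : R) :
    ⁅single i j c, Y⁆ i k = c * Y j k := by
  rw [Ring.lie_def, sub_apply, single_mul_apply_same, mul_single_apply_of_ne _ _ _ _ _ hkj,
    sub_zero]

end Matrix

section Triangular

variable {K : Type*} [Field K] {n : ℕ}

theorem coe_natN {i k : ℕ} (hik : i < k) (hk : k < n) :
    (natN n K i k hik hk : Matrix (Fin n) (Fin n) K) = single ⟨i, hik.trans hk⟩ ⟨k, hk⟩ 1 :=
  rfl

theorem natN_eq_lie {i j k : ℕ} (hij : i < j) (hjk : j < k) (hk : k < n) :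
    natN n K i k (hij.trans hjk) hk =
      ⁅natN n K i j hij (hjk.trans hk), natN n K j k hjk hk⁆ := by
  ext : 1
  rw [LieSubalgebra.coe_bracket, coe_natN, coe_natN, coe_natN,
    lie_single_single_of_ne (by simp only [ne_eq, Fin.mk.injEq]; omega), mul_one]

/-- The coefficient `A_{ik,ik}` of the paper, with `0`-based indices; it is `0` unless
`i < k < n`. -/
noncomputable def diagCoeff (D : LieDerivation K (strictUpper n K) (strictUpper n K))
    (i k : ℕ) : K :=
  if h : i < k ∧ k < n then
    (D (natN n K i k h.1 h.2) : Matrix (Fin n) (Fin n) K) ⟨i, h.1.trans h.2⟩ ⟨k, h.2⟩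
  else 0

variable (D : LieDerivation K (strictUpper n K) (strictUpper n K))

theorem diagCoeff_of_lt {i k : ℕ} (hik : i < k) (hk : k < n) :
    diagCoeff D i k =
      (D (natN n K i k hik hk) : Matrix (Fin n) (Fin n) K) ⟨i, hik.trans hk⟩ ⟨k, hk⟩ :=
  dif_pos ⟨hik, hk⟩

theorem diagCoeff_add {i j k : ℕ} (hij : i < j) (hjk : j < k) (hk : k < n) :
    diagCoeff D i k = diagCoeff D i j + diagCoeff D j k := by
  have hi : (⟨i, hij.trans (hjk.trans hk)⟩ : Fin n) ≠ ⟨j, hjk.trans hk⟩ := by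
    simp only [ne_eq, Fin.mk.injEq]; omega
  have hk' : (⟨k, hk⟩ : Fin n) ≠ ⟨j, hjk.trans hk⟩ := by
    simp only [ne_eq, Fin.mk.injEq]; omega
  rw [diagCoeff_of_lt D (hij.trans hjk) hk, diagCoeff_of_lt D hij (hjk.trans hk),
    diagCoeff_of_lt D hjk hk, natN_eq_lie hij hjk hk, D.apply_lie_eq_add, AddMemClass.coe_add,
    LieSubalgebra.coe_bracket, LieSubalgebra.coe_bracket, coe_natN, coe_natN,
    Matrix.add_apply, single_lie_apply_of_ne _ hk', lie_single_apply_of_ne _ hi, one_mul,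
    mul_one, add_comm]

theorem diagCoeff_eq_sum_Ico {i k : ℕ} (hik : i < k) (hk : k < n) :
    diagCoeff D i k = ∑ p ∈ Finset.Ico i k, diagCoeff D p (p + 1) :=
  eq_sum_Ico_of_add_succ (diagCoeff D) hik fun j hij hjk =>
    diagCoeff_add D hij (Nat.lt_succ_self j) (by omega)

end Triangular

theorem derivation_diagonal_coefficient_sum
    (K : Type*) [Field K] (n : ℕ)
    (D : LieDerivation K (strictUpper n K) (strictUpper n K))
    (i k : ℕ) (hik : i + 2 ≤ k) (hk : k < n) :
    ((D (natN n K i k (by omega) hk) : strictUpper n K) : Matrix (Fin n) (Fin n) K)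
        ⟨i, by omega⟩ ⟨k, hk⟩ =
      ∑ p ∈ (Finset.Ico i k).attach,
        ((D (natN n K p.1 (p.1 + 1) (Nat.lt_succ_self _)
              (by have := (Finset.mem_Ico.mp p.2).2; omega)) :
            strictUpper n K) : Matrix (Fin n) (Fin n) K)
          ⟨p.1, by have := (Finset.mem_Ico.mp p.2).2; omega⟩
          ⟨p.1 + 1, by have := (Finset.mem_Ico.mp p.2).2; omega⟩ := by
  rw [← diagCoeff_of_lt D (by omega) hk, diagCoeff_eq_sum_Ico D (by omega) hk,
    ← Finset.sum_attach]
  exact Finset.sum_congr rfl fun p _ =>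
    diagCoeff_of_lt D _ (by have := (Finset.mem_Ico.mp p.2).2; omega)
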